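/- arXiv:2002.08941 — 3 statements merged into one kernel-verified Lean document; each statement's English description precedes it below -/
import Mathlib

section
/- Let m > 0 and for r > m/2 set V(r) = ∫_{{x ∈ ℝ³ : m/2 ≤ |x| ≤ r}} (1 + m/(2|x|))⁶ dx (the Schwarzschild volume of the coordinate ball of radius r). Then there exist constants C > 0 and r₀ > m/2 such that for all r ≥ r₀, | (3V(r)/(4π))^{1/3} − r − 3m/2 | ≤ C/r. In particular (3V(r)/(4π))^{1/3} = r + 3m/2 + O(r^{−1}) as r → ∞. -/
noncomputable section

open MeasureTheory Filter Topology Real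

abbrev E3 : Type := EuclideanSpace ℝ (Fin 3)

/-- The `i`-th partial derivative (the gradient is defined a.e. for locally Lipschitz
functions; `fderiv` takes the junk value `0` where `ψ` is not differentiable). -/
def pd (ψ : E3 → ℝ) (i : Fin 3) (x : E3) : ℝ :=
  fderiv ℝ ψ x (EuclideanSpace.single i 1)

/-- `ψ` is locally Lipschitz on the set `S`. -/
def LocLipOn (S : Set E3) (ψ : E3 → ℝ) : Prop :=
  ∀ x ∈ S, ∃ (C : NNReal) (t : Set E3), t ∈ 𝓝[S] x ∧ LipschitzOnWith C ψ t

/-- The `g`-volume of a set `K`, `∫_K √(det g(x)) dx`. -/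
def gVol (g : E3 → Matrix (Fin 3) (Fin 3) ℝ) (K : Set E3) : ℝ :=
  ∫ x in K, Real.sqrt (g x).det

/-- The `g`-Dirichlet energy `(1/(4π)) ∫_S ∑ g^{ij} ∂_iψ ∂_jψ √(det g) dx`. -/
def gEnergyOn (S : Set E3) (g : E3 → Matrix (Fin 3) (Fin 3) ℝ) (ψ : E3 → ℝ) : ℝ :=
  (1 / (4 * π)) *
    ∫ x in S, (∑ i, ∑ j, (g x)⁻¹ i j * pd ψ i x * pd ψ j x) * Real.sqrt (g x).det

/-- The `g`-capacity of a compact set `K`, relative to the domain `S`: the infimum of the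
normalized `g`-Dirichlet energy over locally Lipschitz test functions on `S` vanishing on `K`
and tending to `1` at infinity. -/
def gCapOn (S : Set E3) (g : E3 → Matrix (Fin 3) (Fin 3) ℝ) (K : Set E3) : ℝ :=
  sInf { e | ∃ ψ : E3 → ℝ, LocLipOn S ψ ∧ (∀ x ∈ K, ψ x = 0) ∧
    Tendsto ψ (cocompact E3 ⊓ 𝓟 S) (𝓝 1) ∧ e = gEnergyOn S g ψ }

/-- The `g`-capacity of a compact set `K ⊆ ℝ³`. -/
def gCap (g : E3 → Matrix (Fin 3) (Fin 3) ℝ) (K : Set E3) : ℝ :=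
  gCapOn Set.univ g K

/-- `K` is an exhaustion of `S` by compact sets: each `K j` is compact, contained in the
interior of `K (j+1)` relative to `S`, and `⋃ j, K j = S`. -/
def IsExhaustion (S : Set E3) (K : ℕ → Set E3) : Prop :=
  (∀ j, IsCompact (K j) ∧ K j ⊆ S) ∧
  (∀ j, ∃ U : Set E3, IsOpen U ∧ K j ⊆ U ∩ S ∧ U ∩ S ⊆ K (j + 1)) ∧
  (⋃ j, K j) = S

/-- `g` is a continuous Riemannian metric on `ℝ³` that is `C⁰`-asymptotically flat. -/
def IsC0AF (g : E3 → Matrix (Fin 3) (Fin 3) ℝ) : Prop :=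
  (∀ i j, Continuous fun x => g x i j) ∧ (∀ x, (g x).IsSymm ∧ (g x).PosDef) ∧
  ∃ q > (0:ℝ), ∃ C > (0:ℝ), ∃ R > (0:ℝ), ∀ x : E3, R ≤ ‖x‖ → ∀ i j,
    |g x i j - (1 : Matrix (Fin 3) (Fin 3) ℝ) i j| ≤ C * ‖x‖ ^ (-q)

/-! In polar coordinates `V(r) = 4π ∫_{m/2}^r s² (1 + m/(2s))⁶ ds`, and the integrand has an
elementary primitive. Expanding it, `3V(r)/(4π) = (r + 3m/2)³ + (9m²/2) r + O(m³ log (r/m))`,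
the excess over `(r + 3m/2)³` lying in `[0, 20 m² r]` once `r ≥ 2m`. Since
`|x^{1/3} - a| ≤ |x - a³| / a²`, the cube root then differs from `r + 3m/2` by at most
`20 m² / r`. -/

open Set Metric

section Annulus

variable {E : Type*} [NormedAddCommGroup E] [NormedSpace ℝ E] [Nontrivial E]
  [FiniteDimensional ℝ E] [MeasurableSpace E] [BorelSpace E]
  (μ : Measure E) [μ.IsAddHaarMeasure]

theorem integral_annulus_fun_norm (f : ℝ → ℝ) {a b : ℝ} (ha : 0 < a) (hab : a ≤ b) :
    ∫ x in {x : E | a ≤ ‖x‖ ∧ ‖x‖ ≤ b}, f ‖x‖ ∂μ =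
      Module.finrank ℝ E * μ.real (ball 0 1) *
        ∫ s in a..b, s ^ (Module.finrank ℝ E - 1) * f s := by
  have hpre : {x : E | a ≤ ‖x‖ ∧ ‖x‖ ≤ b} = (‖·‖) ⁻¹' Icc a b := rfl
  have hIcc : Ioi 0 ∩ Icc a b = Icc a b :=
    inter_eq_self_of_subset_right fun s hs => ha.trans_le hs.1
  have hmul (y : ℝ) : y ^ (Module.finrank ℝ E - 1) • (Icc a b).indicator f y =
      (Icc a b).indicator (fun s => s ^ (Module.finrank ℝ E - 1) * f s) y :=
    (indicator_mul_right (Icc a b) (· ^ (Module.finrank ℝ E - 1)) f).symm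
  rw [hpre, ← integral_indicator (measurableSet_Icc.preimage continuous_norm.measurable)]
  simp_rw [← Function.comp_apply (f := f) (g := (‖·‖)), indicator_comp_right]
  rw [integral_fun_norm_addHaar μ, nsmul_eq_mul, smul_eq_mul, ← mul_assoc]
  simp_rw [hmul]
  rw [setIntegral_indicator measurableSet_Icc, hIcc, integral_Icc_eq_integral_Ioc,
    ← intervalIntegral.integral_of_le hab]

end Annulus

theorem integral_annulus_fun_norm_euclideanSpace_fin_three (f : ℝ → ℝ) {a b : ℝ} (ha : 0 < a)
    (hab : a ≤ b) :
    ∫ x in {x : E3 | a ≤ ‖x‖ ∧ ‖x‖ ≤ b}, f ‖x‖ = 4 * π * ∫ s in a..b, s ^ 2 * f s := by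
  rw [integral_annulus_fun_norm volume f ha hab, finrank_euclideanSpace_fin, measureReal_def,
    EuclideanSpace.volume_ball_fin_three, ENNReal.toReal_mul, ENNReal.toReal_ofReal (by positivity)]
  push_cast
  simp only [ENNReal.ofReal_one, one_pow, ENNReal.toReal_one, one_mul]
  ring

def schwarzschildRadialPrimitive (m s : ℝ) : ℝ :=
  s ^ 3 / 3 + 3 * m / 2 * s ^ 2 + 15 * m ^ 2 / 4 * s + 5 * m ^ 3 / 2 * log s
    - 15 * m ^ 4 / 16 * s⁻¹ - 3 * m ^ 5 / 32 * (s ^ 2)⁻¹ - m ^ 6 / 192 * (s ^ 3)⁻¹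

theorem hasDerivAt_schwarzschildRadialPrimitive (m : ℝ) {s : ℝ} (hs : s ≠ 0) :
    HasDerivAt (schwarzschildRadialPrimitive m) (s ^ 2 * (1 + m / (2 * s)) ^ 6) s := by
  have h :=
    ((((((((hasDerivAt_pow 3 s).div_const 3).add
      ((hasDerivAt_pow 2 s).const_mul (3 * m / 2))).add
      ((hasDerivAt_id s).const_mul (15 * m ^ 2 / 4))).add
      ((hasDerivAt_log hs).const_mul (5 * m ^ 3 / 2))).sub
      ((hasDerivAt_inv hs).const_mul (15 * m ^ 4 / 16))).sub
      (((hasDerivAt_pow 2 s).inv (pow_ne_zero 2 hs)).const_mul (3 * m ^ 5 / 32))).sub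
      (((hasDerivAt_pow 3 s).inv (pow_ne_zero 3 hs)).const_mul (m ^ 6 / 192)))
  refine h.congr_deriv ?_
  field_simp
  ring

theorem integral_sq_mul_schwarzschild_factor (m : ℝ) {a b : ℝ} (ha : 0 < a) (hb : 0 < b) :
    ∫ s in a..b, s ^ 2 * (1 + m / (2 * s)) ^ 6 =
      schwarzschildRadialPrimitive m b - schwarzschildRadialPrimitive m a := by
  have hpos : ∀ s ∈ uIcc a b, s ≠ 0 := fun s hs =>
    (lt_min ha hb |>.trans_le hs.1).ne'
  refine intervalIntegral.integral_eq_sub_of_hasDerivAt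
    (fun s hs => hasDerivAt_schwarzschildRadialPrimitive m (hpos s hs)) ?_
  refine ContinuousOn.intervalIntegrable fun s hs => ?_
  have := hpos s hs
  fun_prop (disch := positivity)

theorem schwarzschildRadialPrimitive_half (m : ℝ) (hm : m ≠ 0) :
    schwarzschildRadialPrimitive m (m / 2) = 5 * m ^ 3 / 2 * log (m / 2) := by
  unfold schwarzschildRadialPrimitive
  field_simp
  ring

theorem schwarzschild_volume_cube_bounds {m r : ℝ} (hm : 0 < m) (hr : 2 * m ≤ r) :
    (r + 3 * m / 2) ^ 3 ≤
        3 * (schwarzschildRadialPrimitive m r - schwarzschildRadialPrimitive m (m / 2)) ∧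
      3 * (schwarzschildRadialPrimitive m r - schwarzschildRadialPrimitive m (m / 2)) ≤
        (r + 3 * m / 2) ^ 3 + 20 * m ^ 2 * r := by
  have hr0 : 0 < r := by linarith
  set L := log (2 * r / m) with hL
  set x := m / r with hx
  set tail := 45 / 16 * x + 9 / 32 * x ^ 2 + 1 / 64 * x ^ 3 with htail
  have hexpand : 3 * (schwarzschildRadialPrimitive m r - schwarzschildRadialPrimitive m (m / 2)) =
      (r + 3 * m / 2) ^ 3 + 9 * m ^ 2 / 2 * r - 27 * m ^ 3 / 8 + 15 * m ^ 3 / 2 * L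
        - m ^ 3 * tail := by
    rw [schwarzschildRadialPrimitive_half m hm.ne', htail, hx, hL,
      show 2 * r / m = r / (m / 2) by ring, log_div hr0.ne' (by positivity),
      schwarzschildRadialPrimitive]
    field_simp
    ring
  have hL0 : 0 ≤ L := log_nonneg (by rw [le_div_iff₀ hm]; linarith)
  have hmL : m * L ≤ 2 * r := by
    have hlog := log_le_sub_one_of_pos (show 0 < 2 * r / m by positivity)
    have hcancel : m * (2 * r / m) = 2 * r := by field_simp
    nlinarith
  have hx0 : 0 ≤ x := by positivity
  have hx : x ≤ 1 / 2 := by rw [div_le_iff₀ hr0]; linarith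
  have htail0 : 0 ≤ tail := by positivity
  have htail2 : tail ≤ 2 := by nlinarith [mul_nonneg hx0 hx0]
  rw [hexpand]
  constructor <;> nlinarith [pow_pos hm 3, mul_le_mul_of_nonneg_left hmL (sq_nonneg m)]

theorem abs_rpow_one_third_sub_le {x a : ℝ} (hx : 0 ≤ x) (ha : 0 < a) :
    |x ^ ((1 : ℝ) / 3) - a| ≤ |x - a ^ 3| / a ^ 2 := by
  set t := x ^ ((1 : ℝ) / 3)
  have ht : 0 ≤ t := rpow_nonneg hx _
  have hcube : t ^ 3 = x := by
    simpa only [t, one_div, Nat.cast_ofNat] using rpow_inv_natCast_pow hx three_ne_zero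
  rw [le_div_iff₀ (by positivity), ← hcube,
    show t ^ 3 - a ^ 3 = (t - a) * (t ^ 2 + t * a + a ^ 2) by ring, abs_mul,
    abs_of_nonneg (by positivity : 0 ≤ t ^ 2 + t * a + a ^ 2)]
  gcongr
  nlinarith [mul_nonneg ht ha.le]

/-- **Volume radius expansion in Schwarzschild.** For `m > 0` and
`V(r) = ∫_{m/2 ≤ |x| ≤ r} (1 + m/(2|x|))⁶ dx`, one has
`(3V(r)/(4π))^{1/3} = r + 3m/2 + O(r⁻¹)` as `r → ∞`. -/
theorem schwarzschild_volume_radius_expansion (m : ℝ) (hm : 0 < m) :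
    ∃ C > (0 : ℝ), ∃ r₀ > m / 2, ∀ r ≥ r₀,
      |(3 * (∫ x in {x : E3 | m / 2 ≤ ‖x‖ ∧ ‖x‖ ≤ r}, (1 + m / (2 * ‖x‖)) ^ 6) / (4 * π))
          ^ ((1 : ℝ) / 3) - r - 3 * m / 2| ≤ C / r := by
  refine ⟨20 * m ^ 2, by positivity, 2 * m, by linarith, fun r hr => ?_⟩
  have hr0 : 0 < r := by linarith
  rw [integral_annulus_fun_norm_euclideanSpace_fin_three (fun s => (1 + m / (2 * s)) ^ 6)
      (half_pos hm) (by linarith),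
    integral_sq_mul_schwarzschild_factor m (half_pos hm) hr0,
    mul_div_assoc, mul_div_cancel_left₀ _ (by positivity), sub_sub]
  set Q := 3 * (schwarzschildRadialPrimitive m r - schwarzschildRadialPrimitive m (m / 2))
  obtain ⟨hlow, hup⟩ := schwarzschild_volume_cube_bounds hm hr
  calc |Q ^ ((1 : ℝ) / 3) - (r + 3 * m / 2)|
      ≤ |Q - (r + 3 * m / 2) ^ 3| / (r + 3 * m / 2) ^ 2 :=
        abs_rpow_one_third_sub_le (le_trans (by positivity) hlow) (by positivity)
    _ ≤ 20 * m ^ 2 * r / r ^ 2 := by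
        rw [abs_of_nonneg (sub_nonneg.2 hlow)]
        gcongr
        · linarith
        · linarith
    _ = 20 * m ^ 2 / r := by field_simp
end
end

section
/- Let g₁ and g₂ be continuous Riemannian metrics on ℝ³ and Λ ≥ 1 a constant with Λ^{−2} g₂(x) ≤ g₁(x) ≤ Λ² g₂(x) as quadratic forms for every x ∈ ℝ³. Then for every compact set K ⊆ ℝ³: Λ^{−3} |K|_{g₂} ≤ |K|_{g₁} ≤ Λ³ |K|_{g₂}, and Λ^{−3} cap_{g₂}(K) ≤ cap_{g₁}(K) ≤ Λ³ cap_{g₂}(K). -/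
noncomputable section

open MeasureTheory Filter Topology Real

/-!
Simultaneously diagonalize the two metrics: at each point choose `P` with `Pᵀ g₂ P = 1` and
`Pᵀ g₁ P = diag d`. The hypothesis says exactly `Λ⁻² ≤ dᵢ ≤ Λ²`. Then
`det g₁ = (∏ dᵢ) det g₂ ≤ Λ⁶ det g₂`, and in the coordinates `w = Pᵀ v` the two energy densities
are `√(det g₂) ∑ √(∏ⱼ dⱼ) wᵢ² / dᵢ` and `√(det g₂) ∑ wᵢ²`; each `√(∏ⱼ dⱼ) / dᵢ` is the square
root of the two other `dⱼ` divided by `dᵢ`, hence at most `Λ³`. The pointwise bounds integrate, and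
capacities are infima of energies over the same test functions.
-/

theorem Real.sqrt_prod_le_pow_card_mul {ι : Type*} [Fintype ι] [DecidableEq ι] {d : ι → ℝ}
    {Λ : ℝ} (hΛ : 0 ≤ Λ) (hd₀ : ∀ j, 0 ≤ d j) (hd : ∀ j, d j ≤ Λ ^ 2) {i : ι}
    (hi : 1 ≤ Λ ^ 2 * d i) :
    √(∏ j, d j) ≤ Λ ^ Fintype.card ι * d i := by
  have hcard : (Finset.univ.erase i).card + 1 = Fintype.card ι :=
    Finset.card_erase_add_one (Finset.mem_univ i)
  have herase : ∏ j ∈ Finset.univ.erase i, d j ≤ (Λ ^ 2) ^ (Finset.univ.erase i).card :=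
    (Finset.prod_le_prod (fun j _ => hd₀ j) fun j _ => hd j).trans_eq (Finset.prod_const _)
  rw [Real.sqrt_le_left (by have := hd₀ i; positivity),
    ← Finset.mul_prod_erase _ _ (Finset.mem_univ i), ← hcard]
  calc d i * ∏ j ∈ Finset.univ.erase i, d j ≤ d i * (Λ ^ 2) ^ (Finset.univ.erase i).card :=
        mul_le_mul_of_nonneg_left herase (hd₀ i)
    _ ≤ d i * (Λ ^ 2) ^ (Finset.univ.erase i).card * (Λ ^ 2 * d i) :=
        le_mul_of_one_le_right (by have := hd₀ i; positivity) hi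
    _ = (Λ ^ ((Finset.univ.erase i).card + 1) * d i) ^ 2 := by ring

namespace Matrix
variable {ι : Type*} [Fintype ι]

theorem dotProduct_transpose_mul_mul_mulVec (P M : Matrix ι ι ℝ) (x : ι → ℝ) :
    x ⬝ᵥ (Pᵀ * M * P) *ᵥ x = (P *ᵥ x) ⬝ᵥ M *ᵥ (P *ᵥ x) := by
  rw [← mulVec_mulVec, ← mulVec_mulVec, dotProduct_mulVec, vecMul_transpose]

theorem sum_sum_mul_mul_eq_dotProduct_mulVec (M : Matrix ι ι ℝ) (v : ι → ℝ) :
    ∑ i, ∑ j, M i j * v i * v j = v ⬝ᵥ M *ᵥ v := by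
  simp only [dotProduct, mulVec, Finset.mul_sum]
  exact Finset.sum_congr rfl fun i _ => Finset.sum_congr rfl fun j _ => by ring

variable [DecidableEq ι]

theorem IsHermitian.transpose_eigenvectorUnitary_mul_mul {B : Matrix ι ι ℝ} (hB : B.IsHermitian) :
    (hB.eigenvectorUnitary : Matrix ι ι ℝ)ᵀ * B * hB.eigenvectorUnitary =
      diagonal hB.eigenvalues := by
  simpa [Unitary.conjStarAlgAut_star_apply, star_eq_conjTranspose] using
    hB.conjStarAlgAut_star_eigenvectorUnitary

theorem PosDef.exists_transpose_mul_mul_eq_one {B : Matrix ι ι ℝ} (hB : B.PosDef) :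
    ∃ T : Matrix ι ι ℝ, Tᵀ * B * T = 1 := by
  set U : Matrix ι ι ℝ := ↑hB.isHermitian.eigenvectorUnitary
  refine ⟨U * diagonal fun i => (√(hB.isHermitian.eigenvalues i))⁻¹, ?_⟩
  rw [transpose_mul, diagonal_transpose,
    show ∀ D : Matrix ι ι ℝ, D * Uᵀ * B * (U * D) = D * (Uᵀ * B * U) * D by
      intro D; simp only [Matrix.mul_assoc],
    hB.isHermitian.transpose_eigenvectorUnitary_mul_mul, diagonal_mul_diagonal,
    diagonal_mul_diagonal, ← diagonal_one]
  congr 1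
  ext i
  have := hB.eigenvalues_pos i
  field_simp
  rw [Real.sq_sqrt this.le]

theorem PosDef.exists_simultaneous_diagonalization {A B : Matrix ι ι ℝ} (hB : B.PosDef)
    (hA : A.IsHermitian) :
    ∃ (P : Matrix ι ι ℝ) (d : ι → ℝ), Pᵀ * B * P = 1 ∧ Pᵀ * A * P = diagonal d := by
  obtain ⟨T, hT⟩ := hB.exists_transpose_mul_mul_eq_one
  have hA' : (Tᵀ * A * T).IsHermitian := by
    simpa [conjTranspose_eq_transpose_of_trivial] using isHermitian_conjTranspose_mul_mul T hA
  set V : Matrix ι ι ℝ := ↑hA'.eigenvectorUnitary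
  have hV : Vᵀ * V = 1 := by
    simpa [star_eq_conjTranspose] using Unitary.coe_star_mul_self hA'.eigenvectorUnitary
  refine ⟨T * V, hA'.eigenvalues, ?_, ?_⟩
  · calc (T * V)ᵀ * B * (T * V) = Vᵀ * (Tᵀ * B * T) * V := by
          simp only [transpose_mul, Matrix.mul_assoc]
      _ = 1 := by rw [hT, Matrix.mul_one, hV]
  · rw [← hA'.transpose_eigenvectorUnitary_mul_mul, transpose_mul]
    simp only [Matrix.mul_assoc, V]

theorem dotProduct_diagonal_mulVec (d x : ι → ℝ) :
    x ⬝ᵥ diagonal d *ᵥ x = ∑ i, d i * x i ^ 2 := by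
  simp only [dotProduct, mulVec_diagonal]
  exact Finset.sum_congr rfl fun i _ => by ring

theorem inv_eq_of_transpose_mul_mul_eq_diagonal {M P : Matrix ι ι ℝ} {d : ι → ℝ}
    (hd : ∀ i, d i ≠ 0) (h : Pᵀ * M * P = diagonal d) : M⁻¹ = P * diagonal d⁻¹ * Pᵀ := by
  refine inv_eq_right_inv ?_
  have : (diagonal d⁻¹ * Pᵀ) * (M * P) = 1 := by
    rw [Matrix.mul_assoc, ← Matrix.mul_assoc Pᵀ, h, diagonal_mul_diagonal, ← diagonal_one]
    congr 1; ext i; exact inv_mul_cancel₀ (hd i)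
  rw [mul_eq_one_comm] at this
  simpa only [Matrix.mul_assoc] using this

section SimultaneousDiagonalization
variable {A B P : Matrix ι ι ℝ} {d : ι → ℝ}
  (hPB : Pᵀ * B * P = 1) (hPA : Pᵀ * A * P = diagonal d)
include hPB hPA

theorem det_eq_prod_mul_det_of_simultaneous : A.det = (∏ i, d i) * B.det := by
  have hA := congrArg det hPA
  have hB := congrArg det hPB
  simp only [det_mul, det_transpose, det_diagonal, det_one] at hA hB
  linear_combination B.det * hA - A.det * hB

theorem eq_dotProduct_of_simultaneous (i : ι) :
    d i = (P *ᵥ Pi.single i 1) ⬝ᵥ A *ᵥ (P *ᵥ Pi.single i 1) ∧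
      1 = (P *ᵥ Pi.single i 1) ⬝ᵥ B *ᵥ (P *ᵥ Pi.single i 1) := by
  simp only [← dotProduct_transpose_mul_mul_mulVec, hPA, hPB, dotProduct_diagonal_mulVec,
    ← diagonal_one]
  simp [Pi.single_apply]

theorem nonneg_of_simultaneous (hA₀ : A.PosSemidef) (i : ι) : 0 ≤ d i := by
  simpa [(eq_dotProduct_of_simultaneous hPB hPA i).1, star_trivial] using
    hA₀.dotProduct_mulVec_nonneg (P *ᵥ Pi.single i 1)

theorem le_of_simultaneous {c : ℝ} (h : ∀ v, v ⬝ᵥ A *ᵥ v ≤ c * v ⬝ᵥ B *ᵥ v) (i : ι) :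
    d i ≤ c := by
  obtain ⟨hdA, hdB⟩ := eq_dotProduct_of_simultaneous hPB hPA i
  simpa only [← hdA, ← hdB, mul_one] using h (P *ᵥ Pi.single i 1)

theorem one_le_mul_of_simultaneous {c : ℝ} (h : ∀ v, v ⬝ᵥ B *ᵥ v ≤ c * v ⬝ᵥ A *ᵥ v) (i : ι) :
    1 ≤ c * d i := by
  obtain ⟨hdA, hdB⟩ := eq_dotProduct_of_simultaneous hPB hPA i
  simpa only [← hdA, ← hdB] using h (P *ᵥ Pi.single i 1)

end SimultaneousDiagonalization

variable {A B : Matrix ι ι ℝ} {Λ : ℝ}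

theorem sqrt_det_le_pow_card_mul_sqrt_det (hA : A.PosSemidef) (hB : B.PosDef) (hΛ : 0 ≤ Λ)
    (hAB : ∀ v, v ⬝ᵥ A *ᵥ v ≤ Λ ^ 2 * v ⬝ᵥ B *ᵥ v) :
    √A.det ≤ Λ ^ Fintype.card ι * √B.det := by
  obtain ⟨P, d, hPB, hPA⟩ := hB.exists_simultaneous_diagonalization hA.isHermitian
  have hd₀ := nonneg_of_simultaneous hPB hPA hA
  have hdΛ := le_of_simultaneous hPB hPA hAB
  have hprod : ∏ i, d i ≤ (Λ ^ Fintype.card ι) ^ 2 := by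
    rw [← pow_mul, mul_comm, pow_mul]
    exact (Finset.prod_le_prod (fun i _ => hd₀ i) fun i _ => hdΛ i).trans_eq
      (Finset.prod_const _)
  rw [det_eq_prod_mul_det_of_simultaneous hPB hPA,
    Real.sqrt_mul (Finset.prod_nonneg fun i _ => hd₀ i)]
  gcongr
  exact Real.sqrt_le_left (by positivity) |>.2 hprod

theorem dotProduct_inv_mulVec_mul_sqrt_det_le (hA : A.PosSemidef) (hB : B.PosDef) (hΛ : 0 ≤ Λ)
    (hAB : ∀ v, v ⬝ᵥ A *ᵥ v ≤ Λ ^ 2 * v ⬝ᵥ B *ᵥ v)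
    (hBA : ∀ v, v ⬝ᵥ B *ᵥ v ≤ Λ ^ 2 * v ⬝ᵥ A *ᵥ v) (v : ι → ℝ) :
    v ⬝ᵥ A⁻¹ *ᵥ v * √A.det ≤ Λ ^ Fintype.card ι * (v ⬝ᵥ B⁻¹ *ᵥ v * √B.det) := by
  obtain ⟨P, d, hPB, hPA⟩ := hB.exists_simultaneous_diagonalization hA.isHermitian
  have hd₀ := nonneg_of_simultaneous hPB hPA hA
  have hdΛ := le_of_simultaneous hPB hPA hAB
  have hΛd := one_le_mul_of_simultaneous hPB hPA hBA
  have hd_pos i : 0 < d i := pos_of_mul_pos_right (one_pos.trans_le (hΛd i)) (sq_nonneg Λ)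
  have hquad (e : ι → ℝ) :
      v ⬝ᵥ (P * diagonal e * Pᵀ) *ᵥ v = ∑ i, e i * (Pᵀ *ᵥ v) i ^ 2 := by
    have := dotProduct_transpose_mul_mul_mulVec Pᵀ (diagonal e) v
    rwa [transpose_transpose, dotProduct_diagonal_mulVec] at this
  have hPB' : Pᵀ * B * P = diagonal 1 := hPB.trans diagonal_one.symm
  rw [inv_eq_of_transpose_mul_mul_eq_diagonal (fun i => (hd_pos i).ne') hPA,
    inv_eq_of_transpose_mul_mul_eq_diagonal (fun _ => one_ne_zero) hPB', hquad, hquad,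
    det_eq_prod_mul_det_of_simultaneous hPB hPA,
    Real.sqrt_mul (Finset.prod_nonneg fun i _ => hd₀ i)]
  simp only [Pi.inv_apply, inv_one, one_mul]
  rw [← mul_assoc, ← mul_assoc, Finset.sum_mul, Finset.mul_sum]
  gcongr ?_ * _
  refine Finset.sum_le_sum fun i _ => ?_
  rw [mul_right_comm]
  refine mul_le_mul_of_nonneg_right ?_ (sq_nonneg _)
  rw [inv_mul_le_iff₀ (hd_pos i), mul_comm]
  exact Real.sqrt_prod_le_pow_card_mul hΛ hd₀ hdΛ (hΛd i)

end Matrix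

open Matrix

theorem MeasureTheory.integral_le_mul_integral_of_le {α : Type*} [MeasurableSpace α]
    {μ : Measure α} {f g : α → ℝ} {a b : ℝ} (hf : 0 ≤ᵐ[μ] f) (hg : 0 ≤ᵐ[μ] g)
    (hgm : AEStronglyMeasurable g μ) (hfg : ∀ᵐ x ∂μ, f x ≤ a * g x)
    (hgf : ∀ᵐ x ∂μ, g x ≤ b * f x) :
    ∫ x, f x ∂μ ≤ a * ∫ x, g x ∂μ := by
  by_cases hgi : Integrable g μ
  · rw [← integral_const_mul]
    exact integral_mono_of_nonneg hf (hgi.const_mul a) hfg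
  · -- `hgf` excludes the junk value `∫ g = 0` for a non-integrable `g` but integrable `f`.
    have hfi : ¬ Integrable f μ := fun hfi => hgi <| (hfi.const_mul b).mono' hgm <| by
      filter_upwards [hg, hgf] with x hx₀ hx
      rwa [Real.norm_of_nonneg hx₀]
    rw [integral_undef hfi, integral_undef hgi, mul_zero]

def capAdmissible (S K : Set E3) : Set (E3 → ℝ) :=
  {ψ | LocLipOn S ψ ∧ (∀ x ∈ K, ψ x = 0) ∧ Tendsto ψ (cocompact E3 ⊓ 𝓟 S) (𝓝 1)}

theorem gCapOn_eq_iInf (S : Set E3) (g : E3 → Matrix (Fin 3) (Fin 3) ℝ) (K : Set E3) :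
    gCapOn S g K = ⨅ ψ : capAdmissible S K, gEnergyOn S g ψ := by
  rw [gCapOn, ← sInf_image']
  congr 1
  ext e
  simp [capAdmissible, eq_comm, and_assoc]

def energyDensity (g : E3 → Matrix (Fin 3) (Fin 3) ℝ) (ψ : E3 → ℝ) (x : E3) : ℝ :=
  (∑ i, ∑ j, (g x)⁻¹ i j * pd ψ i x * pd ψ j x) * √(g x).det

section Comparison

variable {g g₁ g₂ : E3 → Matrix (Fin 3) (Fin 3) ℝ} {Λ : ℝ}

theorem gEnergyOn_eq_integral_energyDensity (S : Set E3) (ψ : E3 → ℝ) :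
    gEnergyOn S g ψ = 1 / (4 * π) * ∫ x in S, energyDensity g ψ x :=
  rfl

theorem energyDensity_eq (ψ : E3 → ℝ) (x : E3) :
    energyDensity g ψ x =
      (fun i => pd ψ i x) ⬝ᵥ (g x)⁻¹ *ᵥ (fun i => pd ψ i x) * √(g x).det := by
  rw [energyDensity, sum_sum_mul_mul_eq_dotProduct_mulVec]

theorem energyDensity_nonneg {x : E3} (hg : (g x).PosDef) (ψ : E3 → ℝ) :
    0 ≤ energyDensity g ψ x := by
  rw [energyDensity_eq]
  refine mul_nonneg ?_ (Real.sqrt_nonneg _)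
  simpa [star_trivial] using hg.inv.posSemidef.dotProduct_mulVec_nonneg (fun i => pd ψ i x)

theorem measurable_energyDensity (hg : Continuous g) (ψ : E3 → ℝ) :
    Measurable (energyDensity g ψ) := by
  have hinv (i j : Fin 3) : Measurable fun x => (g x)⁻¹ i j := by
    simp only [inv_def, Matrix.smul_apply, Ring.inverse_eq_inv']
    exact hg.matrix_det.measurable.inv.mul (hg.matrix_adjugate.matrix_elem i j).measurable
  have hpd (i : Fin 3) : Measurable (pd ψ i) :=
    measurable_fderiv_apply_const ℝ ψ (EuclideanSpace.single i 1)
  refine Measurable.mul ?_ (Real.continuous_sqrt.comp hg.matrix_det).measurable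
  exact Finset.measurable_sum _ fun i _ => Finset.measurable_sum _ fun j _ =>
    ((hinv i j).mul (hpd i)).mul (hpd j)

theorem energyDensity_le_pow_mul_energyDensity {x : E3} (hg₁ : (g₁ x).PosDef)
    (hg₂ : (g₂ x).PosDef) (hΛ : 0 ≤ Λ)
    (h₁₂ : ∀ v, v ⬝ᵥ g₁ x *ᵥ v ≤ Λ ^ 2 * v ⬝ᵥ g₂ x *ᵥ v)
    (h₂₁ : ∀ v, v ⬝ᵥ g₂ x *ᵥ v ≤ Λ ^ 2 * v ⬝ᵥ g₁ x *ᵥ v) (ψ : E3 → ℝ) :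
    energyDensity g₁ ψ x ≤ Λ ^ 3 * energyDensity g₂ ψ x := by
  simpa [energyDensity_eq] using
    dotProduct_inv_mulVec_mul_sqrt_det_le hg₁.posSemidef hg₂ hΛ h₁₂ h₂₁ (fun i => pd ψ i x)

theorem gEnergyOn_nonneg (hpos : ∀ x, (g x).PosDef) (S : Set E3) (ψ : E3 → ℝ) :
    0 ≤ gEnergyOn S g ψ :=
  mul_nonneg (by positivity) (integral_nonneg fun x => energyDensity_nonneg (hpos x) ψ)

variable (hg₂ : Continuous g₂) (hpos₁ : ∀ x, (g₁ x).PosDef) (hpos₂ : ∀ x, (g₂ x).PosDef)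
  (hΛ : 0 ≤ Λ) (h₁₂ : ∀ x v, v ⬝ᵥ g₁ x *ᵥ v ≤ Λ ^ 2 * v ⬝ᵥ g₂ x *ᵥ v)
  (h₂₁ : ∀ x v, v ⬝ᵥ g₂ x *ᵥ v ≤ Λ ^ 2 * v ⬝ᵥ g₁ x *ᵥ v)
include hg₂ hpos₁ hpos₂ hΛ h₁₂ h₂₁

theorem gVol_le_pow_mul_gVol (K : Set E3) : gVol g₁ K ≤ Λ ^ 3 * gVol g₂ K := by
  refine integral_le_mul_integral_of_le (b := Λ ^ 3) (ae_of_all _ fun _ => Real.sqrt_nonneg _)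
    (ae_of_all _ fun _ => Real.sqrt_nonneg _)
    (Real.continuous_sqrt.comp hg₂.matrix_det).aestronglyMeasurable
    (ae_of_all _ fun x => ?_) (ae_of_all _ fun x => ?_)
  · simpa using sqrt_det_le_pow_card_mul_sqrt_det (hpos₁ x).posSemidef (hpos₂ x) hΛ (h₁₂ x)
  · simpa using sqrt_det_le_pow_card_mul_sqrt_det (hpos₂ x).posSemidef (hpos₁ x) hΛ (h₂₁ x)

theorem gEnergyOn_le_pow_mul_gEnergyOn (S : Set E3) (ψ : E3 → ℝ) :
    gEnergyOn S g₁ ψ ≤ Λ ^ 3 * gEnergyOn S g₂ ψ := by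
  rw [gEnergyOn_eq_integral_energyDensity, gEnergyOn_eq_integral_energyDensity, mul_left_comm]
  gcongr
  exact integral_le_mul_integral_of_le (b := Λ ^ 3)
    (ae_of_all _ fun x => energyDensity_nonneg (hpos₁ x) ψ)
    (ae_of_all _ fun x => energyDensity_nonneg (hpos₂ x) ψ)
    (measurable_energyDensity hg₂ ψ).aestronglyMeasurable
    (ae_of_all _ fun x => energyDensity_le_pow_mul_energyDensity (hpos₁ x) (hpos₂ x) hΛ
      (h₁₂ x) (h₂₁ x) ψ)
    (ae_of_all _ fun x => energyDensity_le_pow_mul_energyDensity (hpos₂ x) (hpos₁ x) hΛ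
      (h₂₁ x) (h₁₂ x) ψ)

theorem gCapOn_le_pow_mul_gCapOn (S K : Set E3) : gCapOn S g₁ K ≤ Λ ^ 3 * gCapOn S g₂ K := by
  rw [gCapOn_eq_iInf, gCapOn_eq_iInf, Real.mul_iInf_of_nonneg (by positivity)]
  exact ciInf_mono ⟨0, by rintro _ ⟨ψ, rfl⟩; exact gEnergyOn_nonneg hpos₁ S ψ⟩ fun ψ =>
    gEnergyOn_le_pow_mul_gEnergyOn hg₂ hpos₁ hpos₂ hΛ h₁₂ h₂₁ S ψ

end Comparison

theorem uniformly_equivalent_vol_cap_general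
    (g₁ g₂ : E3 → Matrix (Fin 3) (Fin 3) ℝ)
    (hcont₁ : ∀ i j, Continuous fun x => g₁ x i j)
    (hcont₂ : ∀ i j, Continuous fun x => g₂ x i j)
    (hpos₁ : ∀ x, (g₁ x).PosDef)
    (hpos₂ : ∀ x, (g₂ x).PosDef)
    (Λ : ℝ) (hΛ : 1 ≤ Λ)
    (hequiv : ∀ (x : E3) (v : Fin 3 → ℝ),
      Λ⁻¹ ^ 2 * (∑ i, ∑ j, g₂ x i j * v i * v j) ≤ ∑ i, ∑ j, g₁ x i j * v i * v j ∧
      ∑ i, ∑ j, g₁ x i j * v i * v j ≤ Λ ^ 2 * ∑ i, ∑ j, g₂ x i j * v i * v j)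
    (K : Set E3) :
    (Λ⁻¹ ^ 3 * gVol g₂ K ≤ gVol g₁ K ∧ gVol g₁ K ≤ Λ ^ 3 * gVol g₂ K) ∧
    (Λ⁻¹ ^ 3 * gCap g₂ K ≤ gCap g₁ K ∧ gCap g₁ K ≤ Λ ^ 3 * gCap g₂ K) := by
  have hΛ₀ : 0 ≤ Λ := zero_le_one.trans hΛ
  have hg₁ := continuous_matrix hcont₁
  have hg₂ := continuous_matrix hcont₂
  have h₁₂ x v : v ⬝ᵥ g₁ x *ᵥ v ≤ Λ ^ 2 * v ⬝ᵥ g₂ x *ᵥ v := by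
    simpa only [sum_sum_mul_mul_eq_dotProduct_mulVec] using (hequiv x v).2
  have h₂₁ x v : v ⬝ᵥ g₂ x *ᵥ v ≤ Λ ^ 2 * v ⬝ᵥ g₁ x *ᵥ v := by
    have := (hequiv x v).1
    rwa [inv_pow, inv_mul_le_iff₀ (by positivity), sum_sum_mul_mul_eq_dotProduct_mulVec,
      sum_sum_mul_mul_eq_dotProduct_mulVec] at this
  simp only [inv_pow, inv_mul_le_iff₀ (by positivity : 0 < Λ ^ 3)]
  exact ⟨⟨gVol_le_pow_mul_gVol hg₁ hpos₂ hpos₁ hΛ₀ h₂₁ h₁₂ K,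
      gVol_le_pow_mul_gVol hg₂ hpos₁ hpos₂ hΛ₀ h₁₂ h₂₁ K⟩,
    gCapOn_le_pow_mul_gCapOn hg₁ hpos₂ hpos₁ hΛ₀ h₂₁ h₁₂ _ K,
    gCapOn_le_pow_mul_gCapOn hg₂ hpos₁ hpos₂ hΛ₀ h₁₂ h₂₁ _ K⟩

/-- **Volume and capacity comparison for uniformly equivalent metrics.** If
`Λ⁻² g₂ ≤ g₁ ≤ Λ² g₂` as quadratic forms pointwise, then for every compact `K`,
`Λ⁻³|K|_{g₂} ≤ |K|_{g₁} ≤ Λ³|K|_{g₂}` and `Λ⁻³ cap_{g₂}(K) ≤ cap_{g₁}(K) ≤ Λ³ cap_{g₂}(K)`. -/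
theorem uniformly_equivalent_vol_cap
    (g₁ g₂ : E3 → Matrix (Fin 3) (Fin 3) ℝ)
    (hcont₁ : ∀ i j, Continuous fun x => g₁ x i j)
    (hcont₂ : ∀ i j, Continuous fun x => g₂ x i j)
    (hsym₁ : ∀ x, (g₁ x).IsSymm) (hpos₁ : ∀ x, (g₁ x).PosDef)
    (hsym₂ : ∀ x, (g₂ x).IsSymm) (hpos₂ : ∀ x, (g₂ x).PosDef)
    (Λ : ℝ) (hΛ : 1 ≤ Λ)
    (hequiv : ∀ (x : E3) (v : Fin 3 → ℝ),
      Λ⁻¹ ^ 2 * (∑ i, ∑ j, g₂ x i j * v i * v j) ≤ ∑ i, ∑ j, g₁ x i j * v i * v j ∧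
      ∑ i, ∑ j, g₁ x i j * v i * v j ≤ Λ ^ 2 * ∑ i, ∑ j, g₂ x i j * v i * v j)
    (K : Set E3) (hK : IsCompact K) :
    (Λ⁻¹ ^ 3 * gVol g₂ K ≤ gVol g₁ K ∧ gVol g₁ K ≤ Λ ^ 3 * gVol g₂ K) ∧
    (Λ⁻¹ ^ 3 * gCap g₂ K ≤ gCap g₁ K ∧ gCap g₁ K ≤ Λ ^ 3 * gCap g₂ K) :=
  uniformly_equivalent_vol_cap_general g₁ g₂ hcont₁ hcont₂ hpos₁ hpos₂ Λ hΛ hequiv K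
end
end

section
/- There exists a universal constant γ > 0 with the following property. For every m > 0 and every s ≥ m/2, let A(s) = 4π s² (1 + m/(2s))⁴ and V(s) = ∫_{{x ∈ ℝ³ : m/2 ≤ |x| ≤ s}} (1 + m/(2|x|))⁶ dx. Then (2/A(s)) ( V(s) − A(s)^{3/2}/(6√π) ) ≤ m + γ m² / √(A(s)). -/
noncomputable section

open MeasureTheory Filter Topology Real

/-! In polar coordinates the volume is `4π ∫_{m/2}^s r² (1 + m/(2r))⁶ dr`, and
`(1 + t)⁶ ≤ 1 + 6t + 60t²` for `t = m/(2r) ≤ 1` bounds the integrand by `r² + 3mr + 15m²`.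
With `u = 1 + m/(2s)` the area is `A = 4πR²` for `R = su²`, so `A^{3/2}/(6√π) = 4πR³/3`, and
Bernoulli's `u⁶ ≥ 1 + 3m/s` leaves `V − 4πR³/3 ≤ 4π(ms²/2 + 15m²s)`. Dividing by `A/2` gives
`m/u⁴ + 30m²/(su⁴) ≤ m + 120m²/√A`. -/

open Set

lemma integral_shell_fin_three {a b : ℝ} (ha : 0 ≤ a) (hab : a ≤ b) (f : ℝ → ℝ) :
    ∫ x in {x : EuclideanSpace ℝ (Fin 3) | a ≤ ‖x‖ ∧ ‖x‖ ≤ b}, f ‖x‖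
      = 4 * π * ∫ r in a..b, r ^ 2 * f r := by
  have hshell : {x : EuclideanSpace ℝ (Fin 3) | a ≤ ‖x‖ ∧ ‖x‖ ≤ b} = (‖·‖) ⁻¹' Icc a b := rfl
  have hind : ((‖·‖) ⁻¹' Icc a b).indicator (fun x : EuclideanSpace ℝ (Fin 3) ↦ f ‖x‖)
      = fun x ↦ (Icc a b).indicator f ‖x‖ := funext fun _ ↦ indicator_comp_right _
  have hrad : (fun y ↦ y ^ 2 * (Icc a b).indicator f y)
      = (Icc a b).indicator (fun y ↦ y ^ 2 * f y) :=
    funext fun _ ↦ (indicator_mul_right _ (· ^ 2) f).symm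
  have hIcc : (Ioi 0 ∩ Icc a b : Set ℝ) =ᵐ[volume] (Icc a b : Set ℝ) := by
    have : Ici (0 : ℝ) ∩ Icc a b = Icc a b := inter_eq_right.2 fun y hy ↦ ha.trans hy.1
    conv_rhs => rw [← this]
    exact Ioi_ae_eq_Ici.inter (ae_eq_refl _)
  rw [hshell, ← integral_indicator (measurableSet_Icc.preimage continuous_norm.measurable),
    hind, integral_fun_norm_addHaar]
  simp only [smul_eq_mul, finrank_euclideanSpace_fin, Nat.reduceSub, nsmul_eq_mul]
  rw [hrad, setIntegral_indicator measurableSet_Icc, setIntegral_congr_set hIcc,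
    integral_Icc_eq_integral_Ioc, ← intervalIntegral.integral_of_le hab, measureReal_def,
    EuclideanSpace.volume_ball_fin_three, ENNReal.toReal_mul, ENNReal.toReal_pow,
    ENNReal.toReal_ofReal zero_le_one, ENNReal.toReal_ofReal (by positivity)]
  ring

lemma one_add_pow_six_le {t : ℝ} (ht₀ : 0 ≤ t) (ht₁ : t ≤ 1) :
    (1 + t) ^ 6 ≤ 1 + 6 * t + 60 * t ^ 2 := by
  have h₃ : t ^ 3 ≤ t ^ 2 := pow_le_pow_of_le_one ht₀ ht₁ (by norm_num)
  have h₄ : t ^ 4 ≤ t ^ 2 := pow_le_pow_of_le_one ht₀ ht₁ (by norm_num)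
  have h₅ : t ^ 5 ≤ t ^ 2 := pow_le_pow_of_le_one ht₀ ht₁ (by norm_num)
  have h₆ : t ^ 6 ≤ t ^ 2 := pow_le_pow_of_le_one ht₀ ht₁ (by norm_num)
  nlinarith

lemma sq_mul_one_add_div_pow_six_le {m r : ℝ} (hm : 0 ≤ m) (hr : m / 2 ≤ r) (hr₀ : 0 < r) :
    r ^ 2 * (1 + m / (2 * r)) ^ 6 ≤ r ^ 2 + 3 * m * r + 15 * m ^ 2 := by
  have ht := one_add_pow_six_le (t := m / (2 * r)) (by positivity)
    ((div_le_one (by positivity)).2 (by linarith))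
  calc r ^ 2 * (1 + m / (2 * r)) ^ 6
      ≤ r ^ 2 * (1 + 6 * (m / (2 * r)) + 60 * (m / (2 * r)) ^ 2) := by gcongr
    _ = r ^ 2 + 3 * m * r + 15 * m ^ 2 := by field_simp; ring

lemma integral_sq_mul_one_add_div_pow_six_le {m s : ℝ} (hm : 0 < m) (hs : m / 2 ≤ s) :
    ∫ r in m / 2..s, r ^ 2 * (1 + m / (2 * r)) ^ 6
      ≤ s ^ 3 / 3 + 3 / 2 * m * s ^ 2 + 15 * m ^ 2 * s := by
  have hpos : ∀ r ∈ Icc (m / 2) s, 0 < r := fun r hr ↦ (half_pos hm).trans_le hr.1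
  have hcont : IntervalIntegrable (fun r ↦ r ^ 2 * (1 + m / (2 * r)) ^ 6) volume (m / 2) s := by
    refine ContinuousOn.intervalIntegrable fun r hr ↦ ?_
    have := (hpos r (uIcc_of_le hs ▸ hr)).ne'
    fun_prop (disch := positivity)
  have hpoly : IntervalIntegrable (fun r ↦ r ^ 2 + 3 * m * r + 15 * m ^ 2) volume (m / 2) s :=
    Continuous.intervalIntegrable (by fun_prop) _ _
  calc ∫ r in m / 2..s, r ^ 2 * (1 + m / (2 * r)) ^ 6
      ≤ ∫ r in m / 2..s, (r ^ 2 + 3 * m * r + 15 * m ^ 2) :=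
        intervalIntegral.integral_mono_on hs hcont hpoly
          fun r hr ↦ sq_mul_one_add_div_pow_six_le hm.le hr.1 (hpos r hr)
    _ = (s ^ 3 / 3 + 3 / 2 * m * s ^ 2 + 15 * m ^ 2 * s) - 95 / 12 * m ^ 3 := by
        rw [intervalIntegral.integral_add, intervalIntegral.integral_add,
          intervalIntegral.integral_const_mul, integral_pow, integral_id,
          intervalIntegral.integral_const]
        · simp only [smul_eq_mul]; ring
        all_goals exact Continuous.intervalIntegrable (by fun_prop) _ _
    _ ≤ s ^ 3 / 3 + 3 / 2 * m * s ^ 2 + 15 * m ^ 2 * s := by linarith [pow_pos hm 3]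

lemma schwarzschild_shell_volume_le {m s : ℝ} (hm : 0 < m) (hs : m / 2 ≤ s) :
    ∫ x in {x : E3 | m / 2 ≤ ‖x‖ ∧ ‖x‖ ≤ s}, (1 + m / (2 * ‖x‖)) ^ 6
      ≤ 4 * π * (s ^ 3 / 3 + 3 / 2 * m * s ^ 2 + 15 * m ^ 2 * s) := by
  rw [integral_shell_fin_three (half_pos hm).le hs fun r ↦ (1 + m / (2 * r)) ^ 6]
  exact mul_le_mul_of_nonneg_left (integral_sq_mul_one_add_div_pow_six_le hm hs) (by positivity)

lemma sqrt_four_pi_mul_sq {R : ℝ} (hR : 0 ≤ R) : √(4 * π * R ^ 2) = 2 * √π * R := by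
  rw [show 4 * π * R ^ 2 = (2 * √π * R) ^ 2 by rw [mul_pow, mul_pow, sq_sqrt pi_pos.le]; ring,
    sqrt_sq (by positivity)]

lemma four_pi_mul_sq_rpow_three_halves {R : ℝ} (hR : 0 ≤ R) :
    (4 * π * R ^ 2) ^ ((3 : ℝ) / 2) / (6 * √π) = 4 * π / 3 * R ^ 3 := by
  have hsqrt : (4 * π * R ^ 2) ^ ((3 : ℝ) / 2) = √(4 * π * R ^ 2) ^ 3 := by
    rw [show (3 : ℝ) / 2 = 1 / 2 * (3 : ℕ) by norm_num, rpow_mul (by positivity), ← sqrt_eq_rpow,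
      rpow_natCast]
  have hπ : √π ^ 2 = π := sq_sqrt pi_pos.le
  rw [hsqrt, sqrt_four_pi_mul_sq hR]
  field_simp
  linear_combination 24 * R ^ 3 * hπ

lemma isoperimetric_deficit_le_of_volume_le {m s u V : ℝ} (hm : 0 ≤ m) (hs : 0 < s) (hu : 1 ≤ u)
    (hu₆ : s + 3 * m ≤ s * u ^ 6)
    (hV : V ≤ 4 * π * (s ^ 3 / 3 + 3 / 2 * m * s ^ 2 + 15 * m ^ 2 * s)) :
    2 / (4 * π * (s * u ^ 2) ^ 2) * (V - 4 * π / 3 * (s * u ^ 2) ^ 3)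
      ≤ m + 120 * m ^ 2 / (2 * √π * (s * u ^ 2)) := by
  have hdef : V - 4 * π / 3 * (s * u ^ 2) ^ 3 ≤ 4 * π * (m * s ^ 2 / 2 + 15 * m ^ 2 * s) := by
    nlinarith [mul_le_mul_of_nonneg_left hu₆ (by positivity : 0 ≤ 4 * π / 3 * s ^ 2)]
  have hmain : m / u ^ 4 ≤ m := div_le_self hm (one_le_pow₀ hu)
  have herror : 30 * m ^ 2 / (s * u ^ 4) ≤ 120 * m ^ 2 / (2 * √π * (s * u ^ 2)) := by
    have hπ : √π ≤ 2 := (sqrt_le_left zero_le_two).2 (by linarith [pi_lt_four])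
    have hu₄ : u ^ 2 ≤ u ^ 4 := pow_le_pow_right₀ hu (by norm_num)
    rw [div_le_div_iff₀ (by positivity) (by positivity)]
    nlinarith [mul_le_mul_of_nonneg_left hπ (by positivity : 0 ≤ 60 * m ^ 2 * s * u ^ 2),
      mul_le_mul_of_nonneg_left hu₄ (by positivity : 0 ≤ 120 * m ^ 2 * s)]
  calc 2 / (4 * π * (s * u ^ 2) ^ 2) * (V - 4 * π / 3 * (s * u ^ 2) ^ 3)
      ≤ 2 / (4 * π * (s * u ^ 2) ^ 2) * (4 * π * (m * s ^ 2 / 2 + 15 * m ^ 2 * s)) := by gcongr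
    _ = m / u ^ 4 + 30 * m ^ 2 / (s * u ^ 4) := by field_simp; ring
    _ ≤ m + 120 * m ^ 2 / (2 * √π * (s * u ^ 2)) := add_le_add hmain herror

/-- **Uniform isoperimetric deficit bound for Schwarzschild coordinate balls.** There is a
universal constant `γ > 0` such that for all `m > 0` and `s ≥ m/2`, with
`A(s) = 4πs²(1+m/(2s))⁴` the area of the coordinate sphere and
`V(s) = ∫_{m/2 ≤ |x| ≤ s} (1+m/(2|x|))⁶ dx` the volume between the horizon and that sphere,
`(2/A(s))(V(s) − A(s)^{3/2}/(6√π)) ≤ m + γm²/√(A(s))`. -/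
theorem schwarzschild_isoperimetric_deficit :
    ∃ γ > (0 : ℝ), ∀ m : ℝ, 0 < m → ∀ s : ℝ, m / 2 ≤ s →
      (2 / (4 * π * s ^ 2 * (1 + m / (2 * s)) ^ 4)) *
        ((∫ x in {x : E3 | m / 2 ≤ ‖x‖ ∧ ‖x‖ ≤ s}, (1 + m / (2 * ‖x‖)) ^ 6)
          - (4 * π * s ^ 2 * (1 + m / (2 * s)) ^ 4) ^ ((3 : ℝ) / 2) / (6 * Real.sqrt π))
      ≤ m + γ * m ^ 2 / Real.sqrt (4 * π * s ^ 2 * (1 + m / (2 * s)) ^ 4) := by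
  refine ⟨120, by norm_num, fun m hm s hs ↦ ?_⟩
  have hs₀ : 0 < s := (half_pos hm).trans_le hs
  set u := 1 + m / (2 * s)
  have hu₁ : 1 ≤ u := le_add_of_nonneg_right (by positivity)
  have hu₆ : s + 3 * m ≤ s * u ^ 6 :=
    calc s + 3 * m = s * (1 + (6 : ℕ) * (m / (2 * s))) := by field_simp; ring
      _ ≤ s * u ^ 6 := by
        gcongr
        exact one_add_mul_le_pow (by linarith [show 0 ≤ m / (2 * s) by positivity]) 6
  have hA : 4 * π * s ^ 2 * u ^ 4 = 4 * π * (s * u ^ 2) ^ 2 := by ring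
  rw [hA, sqrt_four_pi_mul_sq (by positivity), four_pi_mul_sq_rpow_three_halves (by positivity)]
  exact isoperimetric_deficit_le_of_volume_le hm.le hs₀ hu₁ hu₆
    (schwarzschild_shell_volume_le hm hs)
end
end
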